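/- Let G and H be finite connected simple graphs, each with at least two vertices, and let S_G and S_H be feasible total mutual-visibility sets of G and H, respectively. Then the set S = (V(G) × V(H)) \ ((V(G) \ S_G) × (V(H) \ S_H)) is a feasible total mutual-visibility set of the strong product G ⊠ H; in particular there exists a feasible total mutual-visibility set S of G ⊠ H with |S| ≥ |S_G|·n(H) + |S_H|·n(G) − |S_G|·|S_H|. -/

import Mathlib

/-!
Distances in `G ⊠ H` are `max (dist g g') (dist h h')`. If, say, `dist h h' ≤ dist g g'`, walk
along a shortest `SG`-avoiding path of `G` while following in `H` a walk of the same length that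
may pause and whose interior avoids `SH`; feasibility of `SH` supplies the vertices outside `SH`
needed for this when `h, h'` are close. The interior of the resulting shortest path lies outside
`SG` and `SH`, hence outside `S`. Feasibility of `S` is likewise checked coordinatewise, via common
neighbours outside `SG` and `SH`.
-/

open SimpleGraph

/-- Vertices `x` and `y` are `X`-visible in `G`: some shortest `x,y`-path has
no internal vertex in `X`. -/
def Visible {V : Type*} (G : SimpleGraph V) (X : Set V) (x y : V) : Prop :=
  ∃ p : G.Walk x y, p.length = G.dist x y ∧ ∀ v ∈ p.support, v ∈ X → v = x ∨ v = y

/-- `X` is a mutual-visibility set of `G`: every two vertices of `X` are `X`-visible. -/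
def IsMVSet {V : Type*} (G : SimpleGraph V) (X : Set V) : Prop :=
  ∀ x ∈ X, ∀ y ∈ X, Visible G X x y

/-- `X` is a total mutual-visibility set of `G`: every two vertices of `G` are
`X`-visible. -/
def IsTMVSet {V : Type*} (G : SimpleGraph V) (X : Set V) : Prop :=
  ∀ x y : V, Visible G X x y

/-- The mutual-visibility number of `G`: the maximum cardinality of a
mutual-visibility set. -/
noncomputable def mu {V : Type*} (G : SimpleGraph V) : ℕ :=
  sSup {n | ∃ X : Set V, IsMVSet G X ∧ X.ncard = n}

/-- The total mutual-visibility number of `G`: the maximum cardinality of a total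
mutual-visibility set. -/
noncomputable def muT {V : Type*} (G : SimpleGraph V) : ℕ :=
  sSup {n | ∃ X : Set V, IsTMVSet G X ∧ X.ncard = n}

/-- A feasible total mutual-visibility set: a total mutual-visibility set `S` such that
any two adjacent vertices of `S` have a common neighbor outside `S`. -/
def IsFeasibleTMVSet {V : Type*} (G : SimpleGraph V) (S : Set V) : Prop :=
  IsTMVSet G S ∧ ∀ x ∈ S, ∀ y ∈ S, G.Adj x y → ∃ z ∉ S, G.Adj x z ∧ G.Adj y z

/-- The strong product of two simple graphs. -/
def strongProd {α β : Type*} (G : SimpleGraph α) (H : SimpleGraph β) :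
    SimpleGraph (α × β) where
  Adj x y := (G.Adj x.1 y.1 ∧ x.2 = y.2) ∨ (x.1 = y.1 ∧ H.Adj x.2 y.2) ∨
    (G.Adj x.1 y.1 ∧ H.Adj x.2 y.2)
  symm := ⟨by
    rintro ⟨a, b⟩ ⟨c, d⟩ (⟨h1, h2⟩ | ⟨h1, h2⟩ | ⟨h1, h2⟩)
    · exact Or.inl ⟨h1.symm, h2.symm⟩
    · exact Or.inr (Or.inl ⟨h1.symm, h2.symm⟩)
    · exact Or.inr (Or.inr ⟨h1.symm, h2.symm⟩)⟩
  loopless := ⟨by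
    rintro ⟨a, b⟩ (⟨h, _⟩ | ⟨_, h⟩ | ⟨h, _⟩)
    · exact G.ne_of_adj h rfl
    · exact H.ne_of_adj h rfl
    · exact G.ne_of_adj h rfl⟩

/-- The iterated (associative) strong product of a finite family of graphs:
two tuples are adjacent iff they are distinct and agree or are adjacent in every
coordinate. -/
def strongProdPi {k : ℕ} {V : Fin k → Type*} (G : ∀ i, SimpleGraph (V i)) :
    SimpleGraph (∀ i, V i) where
  Adj x y := x ≠ y ∧ ∀ i, x i = y i ∨ (G i).Adj (x i) (y i)
  symm := ⟨by
    rintro x y ⟨hne, h⟩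
    exact ⟨hne.symm, fun i => (h i).imp Eq.symm fun hh => hh.symm⟩⟩
  loopless := ⟨fun x h => h.1 rfl⟩

/-- A universal vertex: adjacent to all other vertices. -/
def IsUniversal {V : Type*} (G : SimpleGraph V) (v : V) : Prop :=
  ∀ u : V, u ≠ v → G.Adj v u

/-- A cut vertex: its removal disconnects the graph. -/
def IsCutVertex {V : Type*} (G : SimpleGraph V) (v : V) : Prop :=
  ¬ (G.induce ({v}ᶜ : Set V)).Preconnected

/-- An induced path: a path with no chords between its vertices. -/
def IsInducedPath {V : Type*} (G : SimpleGraph V) {u v : V} (p : G.Walk u v) : Prop :=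
  p.IsPath ∧ ∀ a b : V, a ∈ p.support → b ∈ p.support → G.Adj a b → s(a, b) ∈ p.edges

/-- A block graph: a connected graph in which every pair of vertices is joined
by a unique induced path. -/
def IsBlockGraph {V : Type*} (G : SimpleGraph V) : Prop :=
  G.Connected ∧ ∀ u v : V, ∃! p : G.Walk u v, IsInducedPath G p

/-- A convex set of vertices: every shortest path of `G` between two of its
vertices stays inside the set. -/
def IsConvexSet {V : Type*} (G : SimpleGraph V) (A : Set V) : Prop :=
  ∀ x ∈ A, ∀ y ∈ A, ∀ p : G.Walk x y, p.length = G.dist x y → ∀ v ∈ p.support, v ∈ A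

/-- A cactus graph: a connected graph in which every edge lies in at most one cycle,
i.e. two cycles sharing an edge have the same edge set. -/
def IsCactus {V : Type*} (G : SimpleGraph V) : Prop :=
  G.Connected ∧ ∀ (v : V) (p q : G.Walk v v), p.IsCycle → q.IsCycle →
    ∀ e, e ∈ p.edges → e ∈ q.edges → ∀ e', e' ∈ p.edges ↔ e' ∈ q.edges

/-- A cograph: obtained from a single vertex by repeatedly adding twins, i.e. there is
an enumeration of the vertices in which every vertex except the first is, at the
moment of its addition, a (true or false) twin of some earlier vertex in the induced
subgraph on the vertices added so far. -/
def IsCograph {V : Type*} (G : SimpleGraph V) : Prop :=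
  ∃ l : List V, l.Nodup ∧ (∀ v : V, v ∈ l) ∧
    ∀ i : Fin l.length, (i : ℕ) ≠ 0 →
      ∃ j : Fin l.length, (j : ℕ) < (i : ℕ) ∧
        ∀ z ∈ l.take ((i : ℕ) + 1), z ≠ l.get i → z ≠ l.get j →
          (G.Adj (l.get i) z ↔ G.Adj (l.get j) z)

/-- An enabling vertex: a vertex `v` adjacent to every vertex `u` of `G - v` whose
degree in `G - v` is less than `n(G) - 2`. -/
def IsEnabling {V : Type*} [Fintype V] (G : SimpleGraph V) (v : V) : Prop :=
  ∀ u : V, u ≠ v → (G.neighborSet u \ {v}).ncard < Fintype.card V - 2 → G.Adj v u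

namespace SimpleGraph

variable {V W : Type*} {G : SimpleGraph V}

lemma Connected.eq_or_adj_of_dist_le_one (hG : G.Connected) {x y : V} (h : G.dist x y ≤ 1) :
    x = y ∨ G.Adj x y := by
  rcases Nat.le_one_iff_eq_zero_or_eq_one.1 h with h | h
  · exact .inl (hG.dist_eq_zero_iff.1 h)
  · exact .inr (dist_eq_one_iff_adj.1 h)

lemma exists_walk_of_adj_succ (u : ℕ → V) :
    ∀ n : ℕ, (∀ i < n, G.Adj (u i) (u (i + 1))) →
      ∃ p : G.Walk (u 0) (u n), p.length = n ∧ ∀ v ∈ p.support, ∃ i ≤ n, u i = v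
  | 0, _ => ⟨Walk.nil, rfl, by simp⟩
  | n + 1, hadj => by
    obtain ⟨p, hlen, hsupp⟩ := exists_walk_of_adj_succ u n fun i hi => hadj i (by omega)
    refine ⟨p.concat (hadj n (by omega)), by simp [hlen], fun v hv => ?_⟩
    rw [Walk.support_concat, List.mem_append, List.mem_singleton] at hv
    rcases hv with hv | rfl
    · obtain ⟨i, hi, rfl⟩ := hsupp v hv
      exact ⟨i, by omega, rfl⟩
    · exact ⟨n + 1, le_rfl, rfl⟩

lemma Walk.exists_walk_length_le_of_eq_or_adj {G' : SimpleGraph W} (f : V → W)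
    (hf : ∀ u v, G.Adj u v → f u = f v ∨ G'.Adj (f u) (f v)) {x y : V} :
    ∀ p : G.Walk x y, ∃ q : G'.Walk (f x) (f y), q.length ≤ p.length
  | .nil => ⟨.nil, le_rfl⟩
  | .cons h p => by
    obtain ⟨q, hq⟩ := p.exists_walk_length_le_of_eq_or_adj f hf
    rcases hf _ _ h with he | ha
    · exact ⟨q.copy he.symm rfl, by simp; omega⟩
    · exact ⟨.cons ha q, by simp; omega⟩

lemma Walk.dist_le_length_of_eq_or_adj {G' : SimpleGraph W} (f : V → W)
    (hf : ∀ u v, G.Adj u v → f u = f v ∨ G'.Adj (f u) (f v)) {x y : V} (p : G.Walk x y) :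
    G'.dist (f x) (f y) ≤ p.length :=
  let ⟨q, hq⟩ := p.exists_walk_length_le_of_eq_or_adj f hf
  (dist_le q).trans hq

end SimpleGraph

section Visibility

variable {V : Type*} {G : SimpleGraph V} {X : Set V}

lemma visible_self (x : V) : Visible G X x x :=
  ⟨.nil, by simp, by simp⟩

lemma visible_of_adj {x y : V} (h : G.Adj x y) : Visible G X x y :=
  ⟨h.toWalk, by simp [dist_eq_one_iff_adj.2 h], by simp⟩

lemma Visible.exists_adj_seq {x y : V} (h : Visible G X x y) :
    ∃ f : ℕ → V, f 0 = x ∧ f (G.dist x y) = y ∧ (∀ i < G.dist x y, G.Adj (f i) (f (i + 1))) ∧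
      ∀ i, 0 < i → i < G.dist x y → f i ∉ X := by
  obtain ⟨p, hp, hX⟩ := h
  have hpath := p.isPath_of_length_eq_dist hp
  refine ⟨p.getVert, p.getVert_zero, hp ▸ p.getVert_length,
    fun i hi => p.adj_getVert_succ (hp ▸ hi), fun i h0 hi hmem => ?_⟩
  rcases hX _ (p.getVert_mem_support i) hmem with h | h
  · have := (hpath.getVert_eq_start_iff (by omega)).1 h
    omega
  · have := (hpath.getVert_eq_end_iff (by omega)).1 h
    omega

lemma visible_of_adj_seq (u : ℕ → V) {L : ℕ} (hadj : ∀ i < L, G.Adj (u i) (u (i + 1)))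
    (hL : ∀ p : G.Walk (u 0) (u L), L ≤ p.length) (hX : ∀ i, 0 < i → i < L → u i ∉ X) :
    Visible G X (u 0) (u L) := by
  obtain ⟨p, hlen, hsupp⟩ := exists_walk_of_adj_succ u L hadj
  obtain ⟨q, hq⟩ := Reachable.exists_walk_length_eq_dist ⟨p⟩
  refine ⟨p, le_antisymm (by rw [hlen, ← hq]; exact hL q) (dist_le p), fun v hv hvX => ?_⟩
  obtain ⟨i, hi, rfl⟩ := hsupp v hv
  rcases Nat.eq_zero_or_pos i with rfl | h0
  · exact .inl rfl
  rcases hi.lt_or_eq with hi | rfl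
  · exact absurd hvX (hX i h0 hi)
  · exact .inr rfl

end Visibility

namespace IsFeasibleTMVSet

variable {V : Type*} [Nontrivial V] {G : SimpleGraph V} {S : Set V}

lemma exists_adj_notMem (hG : G.Preconnected) (hS : IsFeasibleTMVSet G S) {x : V} (hx : x ∈ S) :
    ∃ z ∉ S, G.Adj x z := by
  obtain ⟨y, hxy⟩ := hG.exists_adj_of_nontrivial x
  by_cases hy : y ∈ S
  · obtain ⟨z, hz, hxz, -⟩ := hS.2 x hx y hy hxy
    exact ⟨z, hz, hxz⟩
  · exact ⟨y, hy, hxy⟩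

lemma exists_notMem_eq_or_adj (hG : G.Preconnected) (hS : IsFeasibleTMVSet G S) {x y : V}
    (hxy : x = y ∨ G.Adj x y) :
    ∃ z ∉ S, (x = z ∨ G.Adj x z) ∧ (y = z ∨ G.Adj y z) := by
  by_cases hx : x ∈ S
  · by_cases hy : y ∈ S
    · rcases hxy with rfl | hxy
      · obtain ⟨z, hz, hxz⟩ := hS.exists_adj_notMem hG hx
        exact ⟨z, hz, .inr hxz, .inr hxz⟩
      · obtain ⟨z, hz, hxz, hyz⟩ := hS.2 x hx y hy hxy
        exact ⟨z, hz, .inr hxz, .inr hyz⟩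
    · exact ⟨y, hy, hxy, .inl rfl⟩
  · exact ⟨x, hx, .inl rfl, hxy.imp Eq.symm Adj.symm⟩

/-- Pad a shortest `S`-avoiding path by pausing at its second vertex; if `dist x y ≤ 1`, pause
instead at a vertex outside `S` next to both ends. -/
lemma exists_lazy_seq (hG : G.Connected) (hS : IsFeasibleTMVSet G S) (x y : V) {L : ℕ}
    (hL : 2 ≤ L) (hxy : G.dist x y ≤ L) :
    ∃ s : ℕ → V, s 0 = x ∧ s L = y ∧ (∀ i < L, s i = s (i + 1) ∨ G.Adj (s i) (s (i + 1))) ∧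
      ∀ i, 0 < i → i < L → s i ∉ S := by
  rcases le_or_gt (G.dist x y) 1 with hd | hd
  · obtain ⟨z, hz, hxz, hyz⟩ :=
      hS.exists_notMem_eq_or_adj hG.preconnected (hG.eq_or_adj_of_dist_le_one hd)
    refine ⟨fun i => if i = 0 then x else if i = L then y else z, by simp, by simp; omega,
      fun i hi => ?_, fun i h0 hi => by simp [h0.ne', hi.ne, hz]⟩
    by_cases h0 : i = 0
    · simpa [h0, show 1 ≠ L by omega] using hxz
    by_cases h1 : i + 1 = L
    · simpa [h0, h1, show i ≠ L by omega, show L ≠ 0 by omega] using hyz.imp Eq.symm Adj.symm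
    · simp [h0, h1, show i ≠ L by omega]
  · obtain ⟨f, hf0, hfd, hfadj, hfS⟩ := (hS.1 x y).exists_adj_seq
    set d := G.dist x y
    let k : ℕ → ℕ := fun i => max (min i 1) (i - (L - d))
    have hkL : k L = d := by simp only [k]; omega
    have hk : ∀ i < L, k (i + 1) = k i ∨ (k (i + 1) = k i + 1 ∧ k i < d) := fun i _ => by
      simp only [k]; omega
    have hkS : ∀ i, 0 < i → i < L → 0 < k i ∧ k i < d := fun i _ _ => by simp only [k]; omega
    refine ⟨f ∘ k, by simpa [k] using hf0, by simpa [hkL] using hfd, fun i hi => ?_,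
      fun i h0 hi => hfS _ (hkS i h0 hi).1 (hkS i h0 hi).2⟩
    rcases hk i hi with h | ⟨h, hlt⟩
    · exact .inl (by simp only [Function.comp_apply, h])
    · exact .inr (by simpa only [Function.comp_apply, h] using hfadj _ hlt)

end IsFeasibleTMVSet

section StrongProduct

variable {α β : Type*} {G : SimpleGraph α} {H : SimpleGraph β}

lemma strongProd_adj_iff {x y : α × β} :
    (strongProd G H).Adj x y ↔
      x ≠ y ∧ (x.1 = y.1 ∨ G.Adj x.1 y.1) ∧ (x.2 = y.2 ∨ H.Adj x.2 y.2) := by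
  obtain ⟨a, b⟩ := x
  obtain ⟨c, d⟩ := y
  simp only [strongProd, ne_eq, Prod.mk.injEq]
  constructor
  · rintro (⟨h, rfl⟩ | ⟨rfl, h⟩ | ⟨h, h'⟩)
    · exact ⟨fun e => G.ne_of_adj h e.1, .inr h, .inl rfl⟩
    · exact ⟨fun e => H.ne_of_adj h e.2, .inl rfl, .inr h⟩
    · exact ⟨fun e => G.ne_of_adj h e.1, .inr h, .inr h'⟩
  · rintro ⟨hne, rfl | h, rfl | h'⟩
    · exact absurd ⟨rfl, rfl⟩ hne
    · exact .inr (.inl ⟨rfl, h'⟩)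
    · exact .inl ⟨h, rfl⟩
    · exact .inr (.inr ⟨h, h'⟩)

lemma max_dist_le_length_strongProd {x y : α × β} (p : (strongProd G H).Walk x y) :
    max (G.dist x.1 y.1) (H.dist x.2 y.2) ≤ p.length :=
  max_le
    (p.dist_le_length_of_eq_or_adj Prod.fst fun _ _ h => (strongProd_adj_iff.1 h).2.1)
    (p.dist_le_length_of_eq_or_adj Prod.snd fun _ _ h => (strongProd_adj_iff.1 h).2.2)

lemma visible_strongProd_of_seq {SG : Set α} {SH : Set β} (f : ℕ → α) (s : ℕ → β) {L : ℕ}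
    (hadj : ∀ i < L, (strongProd G H).Adj (f i, s i) (f (i + 1), s (i + 1)))
    (hL : L ≤ max (G.dist (f 0) (f L)) (H.dist (s 0) (s L)))
    (hS : ∀ i, 0 < i → i < L → f i ∉ SG ∧ s i ∉ SH) :
    Visible (strongProd G H) (SGᶜ ×ˢ SHᶜ)ᶜ (f 0, s 0) (f L, s L) :=
  visible_of_adj_seq (fun i => (f i, s i)) hadj
    (fun p => hL.trans (max_dist_le_length_strongProd p))
    fun i h0 hi => by simpa using hS i h0 hi

variable [Nontrivial α] [Nontrivial β] {SG : Set α} {SH : Set β}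

theorem isTMVSet_strongProd (hG : G.Connected) (hH : H.Connected) (hSG : IsFeasibleTMVSet G SG)
    (hSH : IsFeasibleTMVSet H SH) : IsTMVSet (strongProd G H) (SGᶜ ×ˢ SHᶜ)ᶜ := by
  intro x y
  rcases le_or_gt (max (G.dist x.1 y.1) (H.dist x.2 y.2)) 1 with hd | hd
  · by_cases hxy : x = y
    · exact hxy ▸ visible_self x
    exact visible_of_adj <| strongProd_adj_iff.2 ⟨hxy,
      hG.eq_or_adj_of_dist_le_one (le_of_max_le_left hd),
      hH.eq_or_adj_of_dist_le_one (le_of_max_le_right hd)⟩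
  rcases le_total (H.dist x.2 y.2) (G.dist x.1 y.1) with hle | hle
  · obtain ⟨f, hf0, hfL, hfadj, hfS⟩ := (hSG.1 x.1 y.1).exists_adj_seq
    obtain ⟨s, hs0, hsL, hsadj, hsS⟩ := hSH.exists_lazy_seq hH x.2 y.2 (by omega) hle
    simpa [hf0, hfL, hs0, hsL] using visible_strongProd_of_seq (SG := SG) (SH := SH) f s
      (fun i hi => strongProd_adj_iff.2
        ⟨fun e => (hfadj i hi).ne (congrArg Prod.fst e), .inr (hfadj i hi), hsadj i hi⟩)
      (by simp [hf0, hfL, hs0, hsL]) fun i h0 hi => ⟨hfS i h0 hi, hsS i h0 hi⟩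
  · obtain ⟨s, hs0, hsL, hsadj, hsS⟩ := (hSH.1 x.2 y.2).exists_adj_seq
    obtain ⟨f, hf0, hfL, hfadj, hfS⟩ := hSG.exists_lazy_seq hG x.1 y.1 (by omega) hle
    simpa [hf0, hfL, hs0, hsL] using visible_strongProd_of_seq (SG := SG) (SH := SH) f s
      (fun i hi => strongProd_adj_iff.2
        ⟨fun e => (hsadj i hi).ne (congrArg Prod.snd e), hfadj i hi, .inr (hsadj i hi)⟩)
      (by simp [hf0, hfL, hs0, hsL]) fun i h0 hi => ⟨hfS i h0 hi, hsS i h0 hi⟩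

theorem isFeasibleTMVSet_strongProd (hG : G.Connected) (hH : H.Connected)
    (hSG : IsFeasibleTMVSet G SG) (hSH : IsFeasibleTMVSet H SH) :
    IsFeasibleTMVSet (strongProd G H) (SGᶜ ×ˢ SHᶜ)ᶜ := by
  refine ⟨isTMVSet_strongProd hG hH hSG hSH, fun x hx y hy hxy => ?_⟩
  obtain ⟨-, hxy₁, hxy₂⟩ := strongProd_adj_iff.1 hxy
  obtain ⟨z₁, hz₁, hxz₁, hyz₁⟩ := hSG.exists_notMem_eq_or_adj hG.preconnected hxy₁
  obtain ⟨z₂, hz₂, hxz₂, hyz₂⟩ := hSH.exists_notMem_eq_or_adj hH.preconnected hxy₂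
  have hz : (z₁, z₂) ∉ (SGᶜ ×ˢ SHᶜ)ᶜ := by simp [hz₁, hz₂]
  exact ⟨(z₁, z₂), hz, strongProd_adj_iff.2 ⟨ne_of_mem_of_not_mem hx hz, hxz₁, hxz₂⟩,
    strongProd_adj_iff.2 ⟨ne_of_mem_of_not_mem hy hz, hyz₁, hyz₂⟩⟩

end StrongProduct

lemma Set.ncard_compl_prod_compl {α β : Type*} [Finite α] [Finite β] (s : Set α) (t : Set β) :
    (sᶜ ×ˢ tᶜ)ᶜ.ncard = s.ncard * Nat.card β + t.ncard * Nat.card α - s.ncard * t.ncard := by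
  have hs := s.ncard_add_ncard_compl
  have ht := t.ncard_add_ncard_compl
  have hst := (sᶜ ×ˢ tᶜ).ncard_add_ncard_compl
  rw [Set.ncard_prod, Nat.card_prod] at hst
  rw [← hs, ← ht] at hst ⊢
  rw [eq_tsub_iff_add_eq_of_le (by nlinarith)]
  nlinarith

theorem stmt_7 {α β : Type*} [Fintype α] [Fintype β]
    (G : SimpleGraph α) (H : SimpleGraph β) (hG : G.Connected) (hH : H.Connected)
    (hα : 2 ≤ Fintype.card α) (hβ : 2 ≤ Fintype.card β)
    (SG : Set α) (SH : Set β)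
    (hSG : IsFeasibleTMVSet G SG) (hSH : IsFeasibleTMVSet H SH) :
    IsFeasibleTMVSet (strongProd G H) ((SGᶜ ×ˢ SHᶜ)ᶜ) ∧
    SG.ncard * Fintype.card β + SH.ncard * Fintype.card α - SG.ncard * SH.ncard
      ≤ ((SGᶜ ×ˢ SHᶜ)ᶜ : Set (α × β)).ncard := by
  have : Nontrivial α := Fintype.one_lt_card_iff_nontrivial.1 hα
  have : Nontrivial β := Fintype.one_lt_card_iff_nontrivial.1 hβ
  refine ⟨isFeasibleTMVSet_strongProd hG hH hSG hSH, ?_⟩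
  rw [Set.ncard_compl_prod_compl, Nat.card_eq_fintype_card, Nat.card_eq_fintype_card]
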